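/- arXiv:2303.09168 — 4 statements merged into one kernel-verified Lean document; each statement's English description precedes it below -/
import Mathlib

section
/- Let R be a local ring (with 2 invertible) and (C,⋆,q) a para-octonion algebra over R((t)). If L is a self-dual R[[t]]-lattice in C with para-unit e ∈ L and q(e) = 1, then writing e = e₁ + e₂ where e₁, e₂ are the components of e in complementary halves of a hyperbolic basis with q(e₁) = q(e₂) = 0, one has: e₁⋆e₁ = e₂, e₂⋆e₂ = e₁, e₁⋆e₂ = e₂⋆e₁ = 0, and ⟨e₁,e₂⟩ = 1. -/
open QuadraticMap

/-!
From `q (x * y) = q x * q y` and the cyclic invariance of the polar form one gets the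
flexible-type identity `x * (y * x) = q x • y`, and by linearization
`x * (y * z) + z * (y * x) = ⟨x, z⟩ • y`. Writing `x = x₀ + ½⟨x, e⟩ e` with `x₀ ⊥ e`, the
para-unit acts as `e * x = x * e = ⟨x, e⟩ e - x`; hence `e * e₁ = e₁ * e = e₂`. The first identity
gives `e₁ * e₂ = e₁ * (e * e₁) = q e₁ • e = 0`, and the linearized one with `x = e`, `y = z = e₁`
gives `e * (e₁ * e₁) = e₁`, i.e. `e - e₁ * e₁ = e₁`. The claims for `e₂` follow by symmetry.
-/

section

variable {K C : Type*} [CommRing K] [NonUnitalNonAssocRing C] [Module K C]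

structure IsSymmetricComposition (q : QuadraticForm K C) : Prop where
  map_mul : ∀ x y : C, q (x * y) = q x * q y
  polar_mul : ∀ x y z : C, polar q (x * y) z = polar q (y * z) x

structure IsParaUnit (q : QuadraticForm K C) (e : C) : Prop where
  mul_self : e * e = e
  mul_of_polar_eq_zero : ∀ x : C, polar q x e = 0 → e * x = -x ∧ x * e = -x

variable {q : QuadraticForm K C}

namespace IsSymmetricComposition

variable (hC : IsSymmetricComposition q)
include hC

theorem polar_mul_right (x y z : C) : polar q (x * z) (y * z) = polar q x y * q z := by
  simp only [QuadraticMap.polar, ← add_mul, hC.map_mul]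
  ring

variable (hsep : (polarBilin q).SeparatingLeft)
include hsep

theorem mul_mul_self (x y : C) : x * (y * x) = q x • y := by
  refine sub_eq_zero.mp (hsep _ fun z => ?_)
  have : polar q (x * (y * x)) z = polar q (q x • y) z := by
    rw [hC.polar_mul, hC.polar_mul, hC.polar_mul_right, polar_smul_left, polar_comm q z y,
      smul_eq_mul, mul_comm]
  simp [this]

theorem mul_mul_add_mul_mul (x y z : C) :
    x * (y * z) + z * (y * x) = polar q x z • y := by
  have h := hC.mul_mul_self hsep (x + z) y
  simp only [mul_add, add_mul, hC.mul_mul_self hsep x, hC.mul_mul_self hsep z] at h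
  have hq : q (x + z) = q x + q z + polar q x z := by
    rw [QuadraticMap.polar]; ring
  rw [hq, add_smul, add_smul, ← sub_eq_zero] at h
  rw [← sub_eq_zero, ← h]
  abel

end IsSymmetricComposition

theorem polar_eq_one_of_add_eq {e a b : C} (hqe : q e = 1) (hab : a + b = e) (ha : q a = 0)
    (hb : q b = 0) : polar q a b = 1 := by
  rw [QuadraticMap.polar, hab, hqe, ha, hb]
  ring

theorem polar_sub_half_smul_eq_zero [Invertible (2 : K)] {e : C} (hqe : q e = 1) (x : C) :
    polar q (x - (⅟2 * polar q x e) • e) e = 0 := by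
  rw [polar_sub_left, polar_smul_left, polar_self, hqe, smul_eq_mul, two_nsmul, ← two_mul,
    mul_one, mul_right_comm, invOf_mul_self, one_mul, sub_self]

theorem polar_eq_one_of_add_eq_left {e a b : C} (hqe : q e = 1) (hab : a + b = e) (ha : q a = 0)
    (hb : q b = 0) : polar q a e = 1 := by
  rw [← hab, polar_add_right, polar_self, ha, polar_eq_one_of_add_eq hqe hab ha hb, smul_zero,
    zero_add]

namespace IsParaUnit

variable {e : C} (he : IsParaUnit q e) (hqe : q e = 1)
include he hqe

theorem mul_left_eq [Invertible (2 : K)] [SMulCommClass K C C] (x : C) :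
    e * x = polar q x e • e - x := by
  obtain ⟨h, -⟩ := he.mul_of_polar_eq_zero _ (polar_sub_half_smul_eq_zero hqe x)
  set c := ⅟2 * polar q x e with hc
  have hcc : c + c = polar q x e := by rw [← two_mul, hc, mul_invOf_cancel_left]
  calc e * x = e * (x - c • e) + c • (e * e) := by rw [mul_sub, mul_smul_comm]; abel
    _ = polar q x e • e - x := by rw [h, he.mul_self, ← hcc, add_smul]; abel

theorem mul_right_eq [Invertible (2 : K)] [IsScalarTower K C C] (x : C) :
    x * e = polar q x e • e - x := by
  obtain ⟨-, h⟩ := he.mul_of_polar_eq_zero _ (polar_sub_half_smul_eq_zero hqe x)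
  set c := ⅟2 * polar q x e with hc
  have hcc : c + c = polar q x e := by rw [← two_mul, hc, mul_invOf_cancel_left]
  calc x * e = (x - c • e) * e + c • (e * e) := by rw [sub_mul, smul_mul_assoc]; abel
    _ = polar q x e • e - x := by rw [h, he.mul_self, ← hcc, add_smul]; abel

variable [Invertible (2 : K)] {a b : C} (hab : a + b = e) (ha : q a = 0) (hb : q b = 0)
include hab ha hb

theorem mul_isotropic [SMulCommClass K C C] : e * a = b := by
  rw [he.mul_left_eq hqe, polar_eq_one_of_add_eq_left hqe hab ha hb, one_smul, ← hab,
    add_sub_cancel_left]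

theorem isotropic_mul [IsScalarTower K C C] : a * e = b := by
  rw [he.mul_right_eq hqe, polar_eq_one_of_add_eq_left hqe hab ha hb, one_smul, ← hab,
    add_sub_cancel_left]

variable [SMulCommClass K C C] (hC : IsSymmetricComposition q)
  (hsep : (polarBilin q).SeparatingLeft)
include hC hsep

theorem isotropic_mul_eq_zero : a * b = 0 := by
  rw [← he.mul_isotropic hqe hab ha hb, hC.mul_mul_self hsep, ha, zero_smul]

theorem isotropic_mul_self [IsScalarTower K C C] : a * a = b := by
  have hpolar : polar q (a * a) e = 1 := by
    rw [hC.polar_mul, he.isotropic_mul hqe hab ha hb, polar_comm,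
      polar_eq_one_of_add_eq hqe hab ha hb]
  have h := hC.mul_mul_add_mul_mul hsep e a a
  rw [he.isotropic_mul hqe hab ha hb, he.isotropic_mul_eq_zero hqe hab ha hb hC hsep, add_zero,
    polar_comm, polar_eq_one_of_add_eq_left hqe hab ha hb, one_smul, he.mul_left_eq hqe, hpolar,
    one_smul, sub_eq_iff_eq_add] at h
  exact (add_left_cancel (hab.trans h)).symm

end IsParaUnit

end

theorem para_unit_hyperbolic_decomposition_general
    (R : Type*) [CommRing R] [Invertible (2 : R)]
    (C : Type*) [NonUnitalNonAssocRing C] [Module (LaurentSeries R) C]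
    [SMulCommClass (LaurentSeries R) C C] [IsScalarTower (LaurentSeries R) C C]
    (q : QuadraticForm (LaurentSeries R) C)
    (hnd : LinearMap.BilinForm.Nondegenerate (polarBilin q))
    -- `(C,⋆,q)` is a symmetric composition algebra:
    (hq : ∀ x y : C, q (x * y) = q x * q y)
    (hsym : ∀ x y z : C, polar q (x * y) z = polar q (y * z) x)
    -- with para-unit `e`:
    (e : C) (hee : e * e = e)
    (hpara : ∀ x : C, polar q x e = 0 → e * x = -x ∧ x * e = -x)
    (hqe : q e = 1)
    -- the hyperbolic components of `e`:
    (e₁ e₂ : C) (hsum : e = e₁ + e₂) (hq1 : q e₁ = 0) (hq2 : q e₂ = 0) :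
    e₁ * e₁ = e₂ ∧ e₂ * e₂ = e₁ ∧ e₁ * e₂ = 0 ∧ e₂ * e₁ = 0 ∧ polar q e₁ e₂ = 1 := by
  let _ : Invertible (2 : LaurentSeries R) :=
    (Invertible.map (algebraMap R (LaurentSeries R)) 2).copy 2 (map_ofNat _ 2).symm
  have hC : IsSymmetricComposition q := ⟨hq, hsym⟩
  have he : IsParaUnit q e := ⟨hee, hpara⟩
  have h12 : e₁ + e₂ = e := hsum.symm
  have h21 : e₂ + e₁ = e := (add_comm e₂ e₁).trans h12
  exact ⟨he.isotropic_mul_self hqe h12 hq1 hq2 hC hnd.1,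
    he.isotropic_mul_self hqe h21 hq2 hq1 hC hnd.1,
    he.isotropic_mul_eq_zero hqe h12 hq1 hq2 hC hnd.1,
    he.isotropic_mul_eq_zero hqe h21 hq2 hq1 hC hnd.1,
    polar_eq_one_of_add_eq hqe h12 hq1 hq2⟩

/-- Let `R` be a local ring with `2` invertible and `(C,⋆,q)` a
para-octonion algebra (an 8-dimensional symmetric composition algebra with para-unit `e`)
over `R((t))`.  If `L` is a self-dual `R[[t]]`-lattice in `C` with `e ∈ L` and `q(e) = 1`,
then writing `e = e₁ + e₂` with `q(e₁) = q(e₂) = 0`, one has `e₁⋆e₁ = e₂`, `e₂⋆e₂ = e₁`,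
`e₁⋆e₂ = e₂⋆e₁ = 0`, and `⟨e₁,e₂⟩ = 1`. -/
theorem para_unit_hyperbolic_decomposition
    (R : Type*) [CommRing R] [IsLocalRing R] [Invertible (2 : R)]
    (C : Type*) [NonUnitalNonAssocRing C] [Module (LaurentSeries R) C]
    [SMulCommClass (LaurentSeries R) C C] [IsScalarTower (LaurentSeries R) C C]
    [Module (PowerSeries R) C] [IsScalarTower (PowerSeries R) (LaurentSeries R) C]
    (q : QuadraticForm (LaurentSeries R) C)
    (hnd : LinearMap.BilinForm.Nondegenerate (polarBilin q))
    (hdim : Module.finrank (LaurentSeries R) C = 8)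
    -- `(C,⋆,q)` is a symmetric composition algebra:
    (hq : ∀ x y : C, q (x * y) = q x * q y)
    (hsym : ∀ x y z : C, polar q (x * y) z = polar q (y * z) x)
    -- with para-unit `e`:
    (e : C) (hee : e * e = e)
    (hpara : ∀ x : C, polar q x e = 0 → e * x = -x ∧ x * e = -x)
    -- `L` is a self-dual `R[[t]]`-lattice containing `e`:
    (L : Submodule (PowerSeries R) C)
    (hL : Submodule.FG L)
    (hsd : {x : C | ∀ y ∈ L, polar q x y ∈
        Set.range (algebraMap (PowerSeries R) (LaurentSeries R))} = (L : Set C))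
    (heL : e ∈ L) (hqe : q e = 1)
    -- the hyperbolic components of `e`:
    (e₁ e₂ : C) (hsum : e = e₁ + e₂) (hq1 : q e₁ = 0) (hq2 : q e₂ = 0) :
    e₁ * e₁ = e₂ ∧ e₂ * e₂ = e₁ ∧ e₁ * e₂ = 0 ∧ e₂ * e₁ = 0 ∧ polar q e₁ e₂ = 1 :=
  para_unit_hyperbolic_decomposition_general R C q hnd hq hsym e hee hpara hqe e₁ e₂ hsum hq1 hq2
end

section
/- Let (S,⋆,q) be a symmetric composition algebra with idempotent-like pair e₁, e₂ satisfying e₁⋆e₁=e₂, e₂⋆e₂=e₁, e₁⋆e₂=e₂⋆e₁=0, q(e₁)=q(e₂)=0, ⟨e₁,e₂⟩=1. Let L₀ = {x : ⟨x,e₁⟩ = ⟨x,e₂⟩ = 0} and Lᵢ = L₀⋆eᵢ. Then L₁ ⊆ L₀, L₂ ⊆ L₀, e₁⋆L₁ = 0, L₁⋆e₂ = 0, e₂⋆L₂ = 0, and L₂⋆e₁ = 0. -/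
/-!
Linearizing `q (x ⋆ y) = q x q y` and moving products across the polar form with
`⟨x ⋆ y, z⟩ = ⟨y ⋆ z, x⟩` gives, by nondegeneracy, the identities
`(x ⋆ y) ⋆ z + (z ⋆ y) ⋆ x = ⟨x, z⟩ y` and `x ⋆ (y ⋆ z) + z ⋆ (y ⋆ x) = ⟨x, z⟩ y`.
For an isotropic `e` the second one with `x = z = e` gives `2 e ⋆ (a ⋆ e) = 0`; the first one
with `(x, y, z) = (a, e, f)` gives `(a ⋆ e) ⋆ f = ⟨a, f⟩ e` as soon as `f ⋆ e = 0`.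
-/

open QuadraticMap

namespace QuadraticForm

variable {R S : Type*} [CommRing R] [NonUnitalNonAssocRing S] [Module R S]

structure IsSymmetricComposition (q : QuadraticForm R S) : Prop where
  map_mul : ∀ x y : S, q (x * y) = q x * q y
  polar_mul_cyclic : ∀ x y z : S, polar q (x * y) z = polar q (y * z) x

theorem eq_of_forall_polar_eq {q : QuadraticForm R S} (hnd : (polarBilin q).SeparatingLeft)
    {u v : S} (h : ∀ w, polar q u w = polar q v w) : u = v :=
  sub_eq_zero.mp <| hnd _ fun w => by
    simp only [polarBilin_apply_apply, polar_sub_left, h, sub_self]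

namespace IsSymmetricComposition

variable {q : QuadraticForm R S}

theorem polar_mul_mul_right (hS : q.IsSymmetricComposition) (x y z : S) :
    polar q (x * y) (z * y) = polar q x z * q y := by
  simp only [polar, ← add_mul, hS.map_mul]
  ring

theorem polar_mul_mul_add_polar_mul_mul (hS : q.IsSymmetricComposition) (x y z w : S) :
    polar q (x * y) (z * w) + polar q (x * w) (z * y) = polar q x z * polar q y w := by
  have h := hS.polar_mul_mul_right x (y + w) z
  rw [mul_add, mul_add, polar_add_left, polar_add_right, polar_add_right,
    hS.polar_mul_mul_right, hS.polar_mul_mul_right, QuadraticMap.map_add q] at h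
  linear_combination h

theorem mul_mul_add_mul_mul (hS : q.IsSymmetricComposition)
    (hnd : (polarBilin q).SeparatingLeft) (x y z : S) :
    x * y * z + z * y * x = polar q x z • y := by
  refine eq_of_forall_polar_eq hnd fun w => ?_
  rw [polar_add_left, polar_smul_left, smul_eq_mul, hS.polar_mul_cyclic (x * y),
    hS.polar_mul_cyclic (z * y), polar_comm q (z * w), hS.polar_mul_mul_add_polar_mul_mul]

theorem mul_mul_add_mul_mul' (hS : q.IsSymmetricComposition)
    (hnd : (polarBilin q).SeparatingLeft) (x y z : S) :
    x * (y * z) + z * (y * x) = polar q x z • y := by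
  refine eq_of_forall_polar_eq hnd fun w => ?_
  rw [polar_add_left, polar_smul_left, smul_eq_mul, hS.polar_mul_cyclic x,
    hS.polar_mul_cyclic (y * z), hS.polar_mul_cyclic z, hS.polar_mul_cyclic (y * x),
    polar_comm q (w * x), polar_comm q (w * z), hS.polar_mul_mul_add_polar_mul_mul,
    polar_comm q z, mul_comm]

theorem mul_mul_self_eq_zero (hS : q.IsSymmetricComposition)
    (hnd : (polarBilin q).SeparatingLeft) (h2 : IsUnit (2 : R)) {e : S} (he : q e = 0) (a : S) :
    e * (a * e) = 0 := by
  have h := hS.mul_mul_add_mul_mul' hnd e a e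
  rw [polar_self, he, smul_zero, zero_smul, ← two_smul R] at h
  exact h2.smul_eq_zero.mp h

theorem mul_mul_eq_zero_of_mul_eq_zero (hS : q.IsSymmetricComposition)
    (hnd : (polarBilin q).SeparatingLeft) {a e f : S} (hfe : f * e = 0)
    (haf : polar q a f = 0) : a * e * f = 0 := by
  simpa only [hfe, haf, zero_mul, add_zero, zero_smul] using hS.mul_mul_add_mul_mul hnd a e f

theorem polar_mul_right_eq_zero_and_mul_eq_zero (hS : q.IsSymmetricComposition)
    (hnd : (polarBilin q).SeparatingLeft) (h2 : IsUnit (2 : R)) {e f a : S} (hee : e * e = f)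
    (hef : e * f = 0) (hfe : f * e = 0) (he : q e = 0) (haf : polar q a f = 0) :
    (polar q (a * e) e = 0 ∧ polar q (a * e) f = 0) ∧ e * (a * e) = 0 ∧ a * e * f = 0 :=
  ⟨⟨by rw [hS.polar_mul_cyclic, hee, polar_comm, haf],
      by rw [hS.polar_mul_cyclic, hef, polar_zero_left]⟩,
    hS.mul_mul_self_eq_zero hnd h2 he a, hS.mul_mul_eq_zero_of_mul_eq_zero hnd hfe haf⟩

end IsSymmetricComposition

end QuadraticForm

theorem para_hyperbolic_pair_subspaces_general (F S : Type*) [Field F] [NonUnitalNonAssocRing S] [Module F S]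
    (h2 : (2 : F) ≠ 0) (q : QuadraticForm F S)
    (hnd : LinearMap.BilinForm.Nondegenerate (polarBilin q))
    (hq : ∀ x y : S, q (x * y) = q x * q y)
    (hsym : ∀ x y z : S, polar q (x * y) z = polar q (y * z) x)
    (e₁ e₂ : S) (h11 : e₁ * e₁ = e₂) (h22 : e₂ * e₂ = e₁)
    (h12 : e₁ * e₂ = 0) (h21 : e₂ * e₁ = 0)
    (hq1 : q e₁ = 0) (hq2 : q e₂ = 0) :
    (∀ x ∈ (fun z => z * e₁) '' {x : S | polar q x e₁ = 0 ∧ polar q x e₂ = 0},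
        (polar q x e₁ = 0 ∧ polar q x e₂ = 0) ∧ e₁ * x = 0 ∧ x * e₂ = 0) ∧
    (∀ x ∈ (fun z => z * e₂) '' {x : S | polar q x e₁ = 0 ∧ polar q x e₂ = 0},
        (polar q x e₁ = 0 ∧ polar q x e₂ = 0) ∧ e₂ * x = 0 ∧ x * e₁ = 0) := by
  have hS : q.IsSymmetricComposition := ⟨hq, hsym⟩
  have h2' : IsUnit (2 : F) := h2.isUnit
  constructor
  · rintro x ⟨a, ⟨-, ha₂⟩, rfl⟩
    exact hS.polar_mul_right_eq_zero_and_mul_eq_zero hnd.1 h2' h11 h12 h21 hq1 ha₂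
  · rintro x ⟨a, ⟨ha₁, -⟩, rfl⟩
    obtain ⟨⟨hx₂, hx₁⟩, hl, hr⟩ :=
      hS.polar_mul_right_eq_zero_and_mul_eq_zero hnd.1 h2' h22 h21 h12 hq2 ha₁
    exact ⟨⟨hx₁, hx₂⟩, hl, hr⟩

/-- With `L₀ = {x : ⟨x,e₁⟩ = ⟨x,e₂⟩ = 0}` and `Lᵢ = L₀⋆eᵢ`:
`L₁ ⊆ L₀`, `L₂ ⊆ L₀`, `e₁⋆L₁ = 0`, `L₁⋆e₂ = 0`, `e₂⋆L₂ = 0`, `L₂⋆e₁ = 0`. -/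
theorem para_hyperbolic_pair_subspaces (F S : Type*) [Field F] [NonUnitalNonAssocRing S] [Module F S]
    [SMulCommClass F S S] [IsScalarTower F S S]
    (h2 : (2 : F) ≠ 0) (q : QuadraticForm F S)
    (hnd : LinearMap.BilinForm.Nondegenerate (polarBilin q))
    (hq : ∀ x y : S, q (x * y) = q x * q y)
    (hsym : ∀ x y z : S, polar q (x * y) z = polar q (y * z) x)
    (e₁ e₂ : S) (h11 : e₁ * e₁ = e₂) (h22 : e₂ * e₂ = e₁)
    (h12 : e₁ * e₂ = 0) (h21 : e₂ * e₁ = 0)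
    (hq1 : q e₁ = 0) (hq2 : q e₂ = 0) (hpol : polar q e₁ e₂ = 1) :
    (∀ x ∈ (fun z => z * e₁) '' {x : S | polar q x e₁ = 0 ∧ polar q x e₂ = 0},
        (polar q x e₁ = 0 ∧ polar q x e₂ = 0) ∧ e₁ * x = 0 ∧ x * e₂ = 0) ∧
    (∀ x ∈ (fun z => z * e₂) '' {x : S | polar q x e₁ = 0 ∧ polar q x e₂ = 0},
        (polar q x e₁ = 0 ∧ polar q x e₂ = 0) ∧ e₂ * x = 0 ∧ x * e₁ = 0) :=
  para_hyperbolic_pair_subspaces_general F S h2 q hnd hq hsym e₁ e₂ h11 h22 h12 h21 hq1 hq2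
end

section
/- With the hypotheses of the previous setting (symmetric composition algebra with para-hyperbolic pair e₁,e₂ and L₀ the orthogonal complement of span(e₁,e₂)), every x ∈ L₀ satisfies x = (e₁⋆x)⋆e₂ + (e₂⋆x)⋆e₁; hence L₀ = L₀⋆e₁ + L₀⋆e₂. -/
/-!
Linearizing `q (x ⋆ y) = q x q y` twice and using the associativity `⟨x ⋆ y, z⟩ = ⟨x, y ⋆ z⟩` of
the polar form, nondegeneracy yields `(x ⋆ y) ⋆ z + (z ⋆ y) ⋆ x = ⟨x, z⟩ y`. With `x = e₁`,
`z = e₂` and `⟨e₁, e₂⟩ = 1` this is the decomposition, and the multiplication table of `e₁, e₂`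
shows that `e₁ ⋆ x`, `e₂ ⋆ x`, `w ⋆ e₁`, `w ⋆ e₂` stay in `L₀` when `x, w ∈ L₀`.
-/

open QuadraticMap

section Linearization

variable {R S : Type*} [CommRing R] [NonUnitalNonAssocRing S] [Module R S]
  {q : QuadraticMap R S R}

theorem polar_mul_mul_right_of_map_mul (hq : ∀ x y : S, q (x * y) = q x * q y) (x y z : S) :
    polar q (x * y) (z * y) = polar q x z * q y := by
  simp only [polar, ← add_mul, hq]
  ring

theorem polar_mul_mul_add_polar_mul_mul (hq : ∀ x y : S, q (x * y) = q x * q y) (x y z w : S) :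
    polar q (x * y) (z * w) + polar q (x * w) (z * y) = polar q x z * polar q y w := by
  have h := polar_mul_mul_right_of_map_mul hq x (y + w) z
  rw [mul_add, mul_add, polar_add_left, polar_add_right, polar_add_right,
    polar_mul_mul_right_of_map_mul hq, polar_mul_mul_right_of_map_mul hq] at h
  simp only [polar] at h ⊢
  linear_combination h

theorem mul_mul_add_mul_mul_eq_polar_smul (hnd : (polarBilin q).Nondegenerate)
    (hq : ∀ x y : S, q (x * y) = q x * q y)
    (hsym : ∀ x y z : S, polar q (x * y) z = polar q (y * z) x) (x y z : S) :
    x * y * z + z * y * x = polar q x z • y := by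
  have hassoc (a b c : S) : polar q (a * b) c = polar q a (b * c) := by
    rw [hsym, polar_comm]
  refine sub_eq_zero.mp (hnd.1 _ fun w => ?_)
  simp only [polarBilin_apply_apply, polar_sub_left, polar_add_left, polar_smul_left,
    smul_eq_mul, hassoc _ _ w, polar_comm q (z * y) (x * w)]
  linear_combination polar_mul_mul_add_polar_mul_mul hq x y z w

end Linearization

section ParaHyperbolicPair

variable {R S : Type*} [CommRing R] [NonUnitalNonAssocRing S] [Module R S]
  {q : QuadraticMap R S R} (hsym : ∀ x y z : S, polar q (x * y) z = polar q (y * z) x)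
  {e e' : S}

include hsym in
theorem polar_mul_right_self_eq_zero (hee : e * e = e') (hee' : e * e' = 0) {w : S}
    (hw : polar q w e' = 0) : polar q (w * e) e = 0 ∧ polar q (w * e) e' = 0 := by
  rw [hsym w, hsym w, hee, hee', polar_zero_left, polar_comm]
  exact ⟨hw, rfl⟩

include hsym in
theorem polar_mul_left_self_eq_zero (hee : e * e = e') (he'e : e' * e = 0) {z : S}
    (hz : polar q z e' = 0) : polar q (e * z) e = 0 ∧ polar q (e * z) e' = 0 := by
  rw [hsym e z, hsym z, hsym e z, hsym z, hee, he'e, polar_zero_left, polar_comm]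
  exact ⟨hz, rfl⟩

end ParaHyperbolicPair

theorem para_hyperbolic_decomposition_general (F S : Type*) [Field F] [NonUnitalNonAssocRing S] [Module F S]
    (q : QuadraticForm F S)
    (hnd : LinearMap.BilinForm.Nondegenerate (polarBilin q))
    (hq : ∀ x y : S, q (x * y) = q x * q y)
    (hsym : ∀ x y z : S, polar q (x * y) z = polar q (y * z) x)
    (e₁ e₂ : S) (h11 : e₁ * e₁ = e₂) (h22 : e₂ * e₂ = e₁)
    (h12 : e₁ * e₂ = 0) (h21 : e₂ * e₁ = 0)
    (hpol : polar q e₁ e₂ = 1) :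
    (∀ x ∈ {x : S | polar q x e₁ = 0 ∧ polar q x e₂ = 0},
        x = (e₁ * x) * e₂ + (e₂ * x) * e₁) ∧
    {x : S | polar q x e₁ = 0 ∧ polar q x e₂ = 0}
      = {z : S | ∃ a ∈ (fun w => w * e₁) '' {x : S | polar q x e₁ = 0 ∧ polar q x e₂ = 0},
          ∃ b ∈ (fun w => w * e₂) '' {x : S | polar q x e₁ = 0 ∧ polar q x e₂ = 0},
            z = a + b} := by
  have hdecomp (x : S) : x = e₁ * x * e₂ + e₂ * x * e₁ := by
    rw [mul_mul_add_mul_mul_eq_polar_smul hnd hq hsym, hpol, one_smul]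
  refine ⟨fun x _ => hdecomp x, Set.ext fun z => ⟨?_, ?_⟩⟩
  · rintro ⟨hz₁, hz₂⟩
    refine ⟨_, ⟨e₂ * z, (polar_mul_left_self_eq_zero hsym h22 h12 hz₁).symm, rfl⟩,
      _, ⟨e₁ * z, polar_mul_left_self_eq_zero hsym h11 h21 hz₂, rfl⟩, ?_⟩
    rw [add_comm]
    exact hdecomp z
  · rintro ⟨_, ⟨w₁, ⟨-, hw₁⟩, rfl⟩, _, ⟨w₂, ⟨hw₂, -⟩, rfl⟩, rfl⟩
    have h₁ := polar_mul_right_self_eq_zero hsym h11 h12 hw₁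
    have h₂ := polar_mul_right_self_eq_zero hsym h22 h21 hw₂
    refine ⟨?_, ?_⟩
    · rw [polar_add_left, h₁.1, h₂.2, add_zero]
    · rw [polar_add_left, h₁.2, h₂.1, add_zero]

/-- Every `x ∈ L₀` satisfies `x = (e₁⋆x)⋆e₂ + (e₂⋆x)⋆e₁`;
hence `L₀ = L₀⋆e₁ + L₀⋆e₂`. -/
theorem para_hyperbolic_decomposition (F S : Type*) [Field F] [NonUnitalNonAssocRing S] [Module F S]
    [SMulCommClass F S S] [IsScalarTower F S S]
    (h2 : (2 : F) ≠ 0) (q : QuadraticForm F S)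
    (hnd : LinearMap.BilinForm.Nondegenerate (polarBilin q))
    (hq : ∀ x y : S, q (x * y) = q x * q y)
    (hsym : ∀ x y z : S, polar q (x * y) z = polar q (y * z) x)
    (e₁ e₂ : S) (h11 : e₁ * e₁ = e₂) (h22 : e₂ * e₂ = e₁)
    (h12 : e₁ * e₂ = 0) (h21 : e₂ * e₁ = 0)
    (hq1 : q e₁ = 0) (hq2 : q e₂ = 0) (hpol : polar q e₁ e₂ = 1) :
    (∀ x ∈ {x : S | polar q x e₁ = 0 ∧ polar q x e₂ = 0},
        x = (e₁ * x) * e₂ + (e₂ * x) * e₁) ∧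
    {x : S | polar q x e₁ = 0 ∧ polar q x e₂ = 0}
      = {z : S | ∃ a ∈ (fun w => w * e₁) '' {x : S | polar q x e₁ = 0 ∧ polar q x e₂ = 0},
          ∃ b ∈ (fun w => w * e₂) '' {x : S | polar q x e₁ = 0 ∧ polar q x e₂ = 0},
            z = a + b} :=
  para_hyperbolic_decomposition_general F S q hnd hq hsym e₁ e₂ h11 h22 h12 h21 hpol
end

section
/- The standard lattice 𝕃₂ = k[[t]]⟨e₁, e₂, t·u₁, u₂, u₃, v₁, t·v₂, v₃⟩ in the split para-octonion algebra over k((t)) is closed under ⋆, contains the para-unit, satisfies 𝕃₂ ⊊ 𝕃₂^∨ ⊊ t⁻¹𝕃₂, and 𝕃₂^∨ ⋆ 𝕃₂^∨ = t⁻¹𝕃₂, where 𝕃₂^∨ = {x : ⟨x, 𝕃₂⟩ ⊆ k[[t]]}. -/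
noncomputable section

variable (k : Type*) [Field k]

/-- The split para-octonion algebra over `k((t))`, coordinatized by the standard basis
`e₁, e₂, u₁, u₂, u₃, v₁, v₂, v₃` (indices `0,…,7`). -/
abbrev C8 := Fin 8 → LaurentSeries k

/-- The standard basis vectors. -/
def E (n : Fin 8) : C8 k := Pi.single n 1

/-- Structure constants of the para-octonion multiplication `⋆` (Table 1):
`e₁⋆e₁=e₂`, `e₂⋆e₂=e₁`, `e₁⋆e₂=e₂⋆e₁=0`, `e₂⋆uᵢ=uᵢ⋆e₁=−uᵢ`, `e₁⋆vᵢ=vᵢ⋆e₂=−vᵢ`,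
`uᵢ⋆vⱼ=−δᵢⱼe₁`, `vᵢ⋆uⱼ=−δᵢⱼe₂`, `uᵢ⋆uⱼ=εᵢⱼₗvₗ`, `vᵢ⋆vⱼ=εᵢⱼₗuₗ`. -/
def bmul (i j : Fin 8) : C8 k :=
  match i.1, j.1 with
  | 0, 0 => E k 1
  | 1, 1 => E k 0
  | 1, 2 => -E k 2 | 1, 3 => -E k 3 | 1, 4 => -E k 4
  | 2, 0 => -E k 2 | 3, 0 => -E k 3 | 4, 0 => -E k 4
  | 0, 5 => -E k 5 | 0, 6 => -E k 6 | 0, 7 => -E k 7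
  | 5, 1 => -E k 5 | 6, 1 => -E k 6 | 7, 1 => -E k 7
  | 2, 5 => -E k 0 | 3, 6 => -E k 0 | 4, 7 => -E k 0
  | 5, 2 => -E k 1 | 6, 3 => -E k 1 | 7, 4 => -E k 1
  | 2, 3 => E k 7 | 3, 2 => -E k 7
  | 3, 4 => E k 5 | 4, 3 => -E k 5
  | 4, 2 => E k 6 | 2, 4 => -E k 6
  | 5, 6 => E k 4 | 6, 5 => -E k 4
  | 6, 7 => E k 2 | 7, 6 => -E k 2
  | 7, 5 => E k 3 | 5, 7 => -E k 3
  | _, _ => 0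

/-- The para-octonion multiplication `⋆`, extended bilinearly from the table. -/
def star8 (x y : C8 k) : C8 k := ∑ i, ∑ j, (x i * y j) • bmul k i j

/-- The bilinear form: `⟨e₁,e₂⟩ = 1`, `⟨uᵢ,vⱼ⟩ = δᵢⱼ`, all other pairings `0`. -/
def bf8 (x y : C8 k) : LaurentSeries k :=
  x 0 * y 1 + x 1 * y 0 + x 2 * y 5 + x 5 * y 2 + x 3 * y 6 + x 6 * y 3
    + x 4 * y 7 + x 7 * y 4

/-- The uniformizer `t` of `k[[t]]`, viewed in `k((t))`. -/
def tK : LaurentSeries k := algebraMap (PowerSeries k) (LaurentSeries k) PowerSeries.X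

/-- The dual lattice `L^∨ = {x : ⟨x, L⟩ ⊆ k[[t]]}`. -/
def dualL (L : Submodule (PowerSeries k) (C8 k)) : Submodule (PowerSeries k) (C8 k) :=
  Submodule.span (PowerSeries k)
    {x | ∀ y ∈ L, bf8 k x y ∈ Set.range (algebraMap (PowerSeries k) (LaurentSeries k))}

/-- The lattice `t⁻¹L`. -/
def tinvL (L : Submodule (PowerSeries k) (C8 k)) : Submodule (PowerSeries k) (C8 k) :=
  Submodule.span (PowerSeries k) ((fun x => (tK k)⁻¹ • x) '' (L : Set (C8 k)))

/-- The standard lattice `𝕃₂ = k[[t]]⟨e₁, e₂, t·u₁, u₂, u₃, v₁, t·v₂, v₃⟩`. -/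
def L2 : Submodule (PowerSeries k) (C8 k) :=
  Submodule.span (PowerSeries k)
    {E k 0, E k 1, tK k • E k 2, E k 3, E k 4, E k 5, tK k • E k 6, E k 7}

/-! All lattices involved are diagonal in the standard basis, `⊕ᵢ t^{nᵢ} k[[t]] eᵢ`; for `𝕃₂`
the exponents are `n = (0,0,1,0,0,0,1,0)`. Inclusion of diagonal lattices is the reverse
pointwise order of exponents, `t⁻¹` shifts the exponents by `-1`, and since `⟨·,·⟩` pairs `eᵢ`
with `e_{σ i}` for an involution `σ`, the dual has exponents `-n ∘ σ`. Every `eᵢ ⋆ eⱼ` is `0`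
or `±eₗ`, so `⋆` maps two diagonal lattices into a third once the exponents add up correctly
along the multiplication table, a finite check; conversely each generator of `t⁻¹𝕃₂` is,
up to sign, the product of two generators of `𝕃₂^∨`. -/

local notation "ι" => algebraMap (PowerSeries k) (LaurentSeries k)

/-- The fractional ideal `tⁿ k[[t]]` of `k((t))`. -/
def tPowSpan (n : ℤ) : Submodule (PowerSeries k) (LaurentSeries k) :=
  Submodule.span (PowerSeries k) {tK k ^ n}

lemma tK_ne_zero : tK k ≠ 0 :=
  (map_ne_zero_iff _ (IsFractionRing.injective (PowerSeries k) (LaurentSeries k))).2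
    PowerSeries.X_ne_zero

lemma tK_pow_natCast (n : ℕ) : tK k ^ (n : ℤ) = ι (PowerSeries.X ^ n) := by
  rw [zpow_natCast, map_pow]; rfl

lemma mem_tPowSpan_iff {n : ℤ} {x : LaurentSeries k} :
    x ∈ tPowSpan k n ↔ ∃ a : PowerSeries k, ι a * tK k ^ n = x := by
  simp only [tPowSpan, Submodule.mem_span_singleton, Algebra.smul_def]

lemma mem_tPowSpan_zero_iff {x : LaurentSeries k} : x ∈ tPowSpan k 0 ↔ x ∈ Set.range ι := by
  simp [mem_tPowSpan_iff, Set.mem_range]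

lemma mul_mem_tPowSpan {a b : ℤ} {x y : LaurentSeries k} (hx : x ∈ tPowSpan k a)
    (hy : y ∈ tPowSpan k b) : x * y ∈ tPowSpan k (a + b) := by
  obtain ⟨c, rfl⟩ := (mem_tPowSpan_iff k).1 hx
  obtain ⟨d, rfl⟩ := (mem_tPowSpan_iff k).1 hy
  refine (mem_tPowSpan_iff k).2 ⟨c * d, ?_⟩
  rw [map_mul, zpow_add₀ (tK_ne_zero k)]
  ring

lemma zpow_mem_tPowSpan_iff {a b : ℤ} : tK k ^ a ∈ tPowSpan k b ↔ b ≤ a := by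
  refine ⟨fun h => ?_, fun h => (mem_tPowSpan_iff k).2 ⟨PowerSeries.X ^ (a - b).toNat, ?_⟩⟩
  · by_contra! hab
    obtain ⟨c, hc⟩ := (mem_tPowSpan_iff k).1 h
    obtain ⟨N, hN⟩ : ∃ N : ℕ, b - a = N + 1 := ⟨(b - a - 1).toNat, by omega⟩
    have hone : ι (c * PowerSeries.X ^ (N + 1)) = ι 1 := by
      rw [map_mul, ← tK_pow_natCast, map_one, Nat.cast_add_one, ← hN, zpow_sub₀ (tK_ne_zero k),
        ← mul_div_assoc, hc, div_self (zpow_ne_zero a (tK_ne_zero k))]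
    have := congrArg PowerSeries.constantCoeff
      (IsFractionRing.injective (PowerSeries k) (LaurentSeries k) hone)
    simp at this
  · rw [← tK_pow_natCast, Int.toNat_of_nonneg (by omega), ← zpow_add₀ (tK_ne_zero k),
      sub_add_cancel]

lemma tPowSpan_le_iff {a b : ℤ} : tPowSpan k a ≤ tPowSpan k b ↔ b ≤ a := by
  rw [tPowSpan, Submodule.span_singleton_le_iff_mem, zpow_mem_tPowSpan_iff]

lemma mul_zpow_mem_tPowSpan_iff {a b : ℤ} {x : LaurentSeries k} :
    x * tK k ^ a ∈ tPowSpan k b ↔ x ∈ tPowSpan k (b - a) := by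
  have ha := zpow_ne_zero a (tK_ne_zero k)
  simp only [mem_tPowSpan_iff, zpow_sub₀ (tK_ne_zero k)]
  refine exists_congr fun c => ?_
  constructor <;> intro h
  · rw [← mul_div_assoc, h, mul_div_cancel_right₀ _ ha]
  · rw [← h, ← mul_div_assoc, div_mul_cancel₀ _ ha]

def diagLattice (n : Fin 8 → ℤ) : Submodule (PowerSeries k) (C8 k) :=
  Submodule.pi Set.univ fun i => tPowSpan k (n i)

lemma mem_diagLattice_iff {n : Fin 8 → ℤ} {x : C8 k} :
    x ∈ diagLattice k n ↔ ∀ i, x i ∈ tPowSpan k (n i) := by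
  simp [diagLattice, Submodule.mem_pi]

lemma smul_E_apply (c : LaurentSeries k) (i j : Fin 8) :
    (c • E k i) j = if j = i then c else 0 := by
  simp [E, Pi.single_apply]

lemma zpow_smul_E_mem_diagLattice_iff {n : Fin 8 → ℤ} {a : ℤ} {i : Fin 8} :
    tK k ^ a • E k i ∈ diagLattice k n ↔ n i ≤ a := by
  rw [mem_diagLattice_iff, ← zpow_mem_tPowSpan_iff k]
  refine ⟨fun h => by simpa only [smul_E_apply, if_pos rfl, if_true] using h i, fun h j => ?_⟩
  rw [smul_E_apply]
  split_ifs with hj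
  · exact hj ▸ h
  · exact zero_mem _

lemma E_mem_diagLattice_iff {n : Fin 8 → ℤ} {i : Fin 8} :
    E k i ∈ diagLattice k n ↔ n i ≤ 0 := by
  rw [← zpow_smul_E_mem_diagLattice_iff k, zpow_zero, one_smul]

lemma span_zpow_smul_E (n : Fin 8 → ℤ) :
    Submodule.span (PowerSeries k) (Set.range fun i => tK k ^ n i • E k i) = diagLattice k n := by
  rw [diagLattice, ← Submodule.iSup_map_single, Submodule.span_range_eq_iSup]
  refine iSup_congr fun i => ?_
  rw [tPowSpan, Submodule.map_span, Set.image_singleton]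
  congr
  funext j
  rw [smul_E_apply, LinearMap.coe_single, Pi.single_apply]

lemma diagLattice_le_iff {m n : Fin 8 → ℤ} : diagLattice k m ≤ diagLattice k n ↔ n ≤ m := by
  refine ⟨fun h i => ?_, fun h => Submodule.pi_mono fun i _ => (tPowSpan_le_iff k).2 (h i)⟩
  exact (zpow_smul_E_mem_diagLattice_iff k).1 (h ((zpow_smul_E_mem_diagLattice_iff k).2 le_rfl))

lemma diagLattice_strictAnti : StrictAnti (diagLattice k) :=
  strictAnti_of_le_iff_le fun _ _ => (diagLattice_le_iff k).symm

lemma tinvL_diagLattice (n : Fin 8 → ℤ) : tinvL k (diagLattice k n) = diagLattice k (n - 1) := by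
  refine le_antisymm (Submodule.span_le.2 ?_) fun x hx => ?_
  · rintro _ ⟨y, hy, rfl⟩
    rw [SetLike.mem_coe, mem_diagLattice_iff] at hy ⊢
    intro i
    dsimp only
    rw [Pi.smul_apply, smul_eq_mul, mul_comm, ← zpow_neg_one, mul_zpow_mem_tPowSpan_iff]
    simpa using hy i
  · have htx : tK k • x ∈ diagLattice k n := by
      rw [mem_diagLattice_iff] at hx ⊢
      intro i
      rw [Pi.smul_apply, smul_eq_mul, mul_comm, ← zpow_one (tK k), mul_zpow_mem_tPowSpan_iff]
      exact hx i
    exact Submodule.subset_span ⟨_, htx, inv_smul_smul₀ (tK_ne_zero k) x⟩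

/-- `bf8` pairs `eᵢ` with `e_{pairIdx i}`: `e₁ ↔ e₂`, `uᵢ ↔ vᵢ`. -/
def pairIdx : Fin 8 → Fin 8 := ![1, 0, 5, 6, 7, 2, 3, 4]

lemma pairIdx_pairIdx (i : Fin 8) : pairIdx (pairIdx i) = i := by
  fin_cases i <;> rfl

lemma bf8_eq_sum (x y : C8 k) : bf8 k x y = ∑ i, x i * y (pairIdx i) := by
  simp only [bf8, pairIdx, Fin.sum_univ_eight, Matrix.cons_val_zero, Matrix.cons_val_one,
    Matrix.cons_val]
  ring

lemma bf8_smul_E (x : C8 k) (c : LaurentSeries k) (j : Fin 8) :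
    bf8 k x (c • E k j) = x (pairIdx j) * c := by
  rw [bf8_eq_sum, Finset.sum_eq_single (pairIdx j)]
  · rw [smul_E_apply, pairIdx_pairIdx, if_pos rfl]
  · intro i _ hi
    rw [smul_E_apply, if_neg, mul_zero]
    contrapose! hi
    rw [← hi, pairIdx_pairIdx]
  · simp

lemma dualL_diagLattice (n : Fin 8 → ℤ) :
    dualL k (diagLattice k n) = diagLattice k fun i => -n (pairIdx i) := by
  suffices {x | ∀ y ∈ diagLattice k n, bf8 k x y ∈ Set.range ι} =
      (diagLattice k fun i => -n (pairIdx i) : Set (C8 k)) by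
    rw [dualL, this, Submodule.span_eq]
  ext x
  simp only [Set.mem_ofPred_eq, SetLike.mem_coe, ← mem_tPowSpan_zero_iff,
    mem_diagLattice_iff k (x := x)]
  refine ⟨fun h i => ?_, fun hx y hy => ?_⟩
  · have := h _ ((zpow_smul_E_mem_diagLattice_iff k).2 (le_refl (n (pairIdx i))))
    rwa [bf8_smul_E, pairIdx_pairIdx, mul_zpow_mem_tPowSpan_iff, zero_sub] at this
  · rw [bf8_eq_sum]
    refine Submodule.sum_mem _ fun i _ => ?_
    simpa using mul_mem_tPowSpan k (hx i) ((mem_diagLattice_iff k).1 hy (pairIdx i))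

lemma star8_smul_E_smul_E (c d : LaurentSeries k) (i j : Fin 8) :
    star8 k (c • E k i) (d • E k j) = (c * d) • bmul k i j := by
  simp only [star8, smul_E_apply, mul_ite, ite_mul, mul_zero, zero_mul, ite_smul,
    zero_smul, Finset.sum_ite_eq', Finset.mem_univ, if_true]

lemma smul_mem_of_mem_tPowSpan {P : Submodule (PowerSeries k) (C8 k)} {a : ℤ}
    {c : LaurentSeries k} {v : C8 k} (hc : c ∈ tPowSpan k a) (hv : tK k ^ a • v ∈ P) :
    c • v ∈ P := by
  obtain ⟨d, rfl⟩ := (mem_tPowSpan_iff k).1 hc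
  rw [mul_smul, algebraMap_smul]
  exact P.smul_mem d hv

lemma star8_mem_diagLattice {n n' m : Fin 8 → ℤ}
    (h : ∀ i j, tK k ^ (n i + n' j) • bmul k i j ∈ diagLattice k m) {x y : C8 k}
    (hx : x ∈ diagLattice k n) (hy : y ∈ diagLattice k n') : star8 k x y ∈ diagLattice k m :=
  Submodule.sum_mem _ fun i _ => Submodule.sum_mem _ fun j _ =>
    smul_mem_of_mem_tPowSpan k (mul_mem_tPowSpan k ((mem_diagLattice_iff k).1 hx i)
      ((mem_diagLattice_iff k).1 hy j)) (h i j)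

lemma diagLattice_le_span_image2_star8 {n n' m : Fin 8 → ℤ}
    (h : ∀ l, ∃ i j, n i + n' j = m l ∧ (bmul k i j = E k l ∨ bmul k i j = -E k l)) :
    diagLattice k m ≤ Submodule.span (PowerSeries k)
      (Set.image2 (star8 k) (diagLattice k n : Set (C8 k)) (diagLattice k n')) := by
  rw [← span_zpow_smul_E, Submodule.span_le]
  rintro _ ⟨l, rfl⟩
  obtain ⟨i, j, hexp, hb⟩ := h l
  have hmem := Submodule.subset_span (R := PowerSeries k) (M := C8 k)
    (Set.mem_image2_of_mem (f := star8 k)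
      ((zpow_smul_E_mem_diagLattice_iff k).2 (le_refl (n i)))
      ((zpow_smul_E_mem_diagLattice_iff k).2 (le_refl (n' j))))
  rw [star8_smul_E_smul_E, ← zpow_add₀ (tK_ne_zero k), hexp] at hmem
  rcases hb with hb | hb
  · rwa [hb] at hmem
  · rwa [hb, smul_neg, SetLike.mem_coe, neg_mem_iff] at hmem

def l2Exp : Fin 8 → ℤ := ![0, 0, 1, 0, 0, 0, 1, 0]

lemma L2_eq_diagLattice : L2 k = diagLattice k l2Exp := by
  rw [← span_zpow_smul_E, L2]
  congr 1
  ext x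
  simp [Fin.exists_fin_succ, l2Exp, eq_comm]

lemma bmul_mem_L2 (i j : Fin 8) :
    tK k ^ (l2Exp i + l2Exp j) • bmul k i j ∈ diagLattice k l2Exp := by
  fin_cases i <;> fin_cases j <;>
    simp only [bmul, smul_neg, smul_zero, neg_mem_iff, zero_mem,
      zpow_smul_E_mem_diagLattice_iff] <;> decide

def l2DualExp : Fin 8 → ℤ := ![0, 0, 0, -1, 0, -1, 0, 0]

lemma dualL_L2 : dualL k (L2 k) = diagLattice k l2DualExp := by
  rw [L2_eq_diagLattice, dualL_diagLattice]
  congr 1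
  decide

lemma bmul_mem_tinvL2 (i j : Fin 8) :
    tK k ^ (l2DualExp i + l2DualExp j) • bmul k i j ∈ diagLattice k (l2Exp - 1) := by
  fin_cases i <;> fin_cases j <;>
    simp only [bmul, smul_neg, smul_zero, neg_mem_iff, zero_mem,
      zpow_smul_E_mem_diagLattice_iff] <;> decide

lemma exists_bmul_eq_E (l : Fin 8) : ∃ i j, l2DualExp i + l2DualExp j = (l2Exp - 1) l ∧
    (bmul k i j = E k l ∨ bmul k i j = -E k l) := by
  fin_cases l
  exacts [⟨3, 6, by decide, .inr rfl⟩, ⟨6, 3, by decide, .inr rfl⟩, ⟨6, 7, by decide, .inl rfl⟩,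
    ⟨7, 5, by decide, .inl rfl⟩, ⟨5, 6, by decide, .inl rfl⟩, ⟨3, 4, by decide, .inl rfl⟩,
    ⟨4, 2, by decide, .inl rfl⟩, ⟨2, 3, by decide, .inl rfl⟩]

theorem standard_lattice_type_two_general (k : Type*) [Field k] :
    (∀ x ∈ L2 k, ∀ y ∈ L2 k, star8 k x y ∈ L2 k) ∧
    (E k 0 + E k 1) ∈ L2 k ∧
    L2 k < dualL k (L2 k) ∧
    dualL k (L2 k) < tinvL k (L2 k) ∧
    Submodule.span (PowerSeries k)
        (Set.image2 (star8 k) (dualL k (L2 k) : Set (C8 k)) (dualL k (L2 k) : Set (C8 k)))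
      = tinvL k (L2 k) := by
  rw [dualL_L2, L2_eq_diagLattice, tinvL_diagLattice]
  refine ⟨fun x hx y hy => star8_mem_diagLattice k (bmul_mem_L2 k) hx hy,
    add_mem ((E_mem_diagLattice_iff k).2 (by decide)) ((E_mem_diagLattice_iff k).2 (by decide)),
    diagLattice_strictAnti k (Pi.lt_def.2 ⟨Pi.le_def.2 (by decide), 2, by decide⟩),
    diagLattice_strictAnti k (Pi.lt_def.2 ⟨Pi.le_def.2 (by decide), 0, by decide⟩),
    le_antisymm (Submodule.span_le.2 ?_) (diagLattice_le_span_image2_star8 k (exists_bmul_eq_E k))⟩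
  rintro _ ⟨x, hx, y, hy, rfl⟩
  exact star8_mem_diagLattice k (bmul_mem_tinvL2 k) hx hy

/-- The standard lattice `𝕃₂` is closed under `⋆`, contains the para-unit
`e = e₁ + e₂`, satisfies `𝕃₂ ⊊ 𝕃₂^∨ ⊊ t⁻¹𝕃₂`, and `𝕃₂^∨ ⋆ 𝕃₂^∨ = t⁻¹𝕃₂`. -/
theorem standard_lattice_type_two (k : Type*) [Field k] (h2 : (2 : k) ≠ 0) :
    (∀ x ∈ L2 k, ∀ y ∈ L2 k, star8 k x y ∈ L2 k) ∧
    (E k 0 + E k 1) ∈ L2 k ∧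
    L2 k < dualL k (L2 k) ∧
    dualL k (L2 k) < tinvL k (L2 k) ∧
    Submodule.span (PowerSeries k)
        (Set.image2 (star8 k) (dualL k (L2 k) : Set (C8 k)) (dualL k (L2 k) : Set (C8 k)))
      = tinvL k (L2 k) :=
  standard_lattice_type_two_general k
end
end
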